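/- Let d, T be positive integers and let L, M ∈ 𝕃. Then there exists O ∈ 𝕆 with L = MO if and only if Σ̃_t^L = Σ̃_t^M for every t ∈ {1,…,T}. In other words, two block-lower triangular factors define the same equivalence class in 𝕃/𝕆 exactly when all their column covariances agree. -/

import Mathlib

open Matrix

/-- Squared Frobenius norm of a real matrix: `‖A‖_F² = tr(Aᵀ A)`. -/
noncomputable def frobSq {m n : Type*} [Fintype m] [Fintype n] (A : Matrix m n ℝ) : ℝ :=
  Matrix.trace (Aᵀ * A)

/-- `O ∈ O(d)`: a real orthogonal matrix. -/
def IsOrth {d : ℕ} (O : Matrix (Fin d) (Fin d) ℝ) : Prop :=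
  O * Oᵀ = 1 ∧ Oᵀ * O = 1

/-- `L ∈ 𝕃`: block-lower triangular w.r.t. `T` blocks of size `d`
(indices are pairs `(i, t)` with `i : Fin d` the within-block index and `t : Fin T`
the block index); the block `L_{t,s}` vanishes for `t < s`. -/
def BlockLT {d T : ℕ} (L : Matrix (Fin d × Fin T) (Fin d × Fin T) ℝ) : Prop :=
  ∀ p q : Fin d × Fin T, p.2 < q.2 → L p q = 0

/-- `O ∈ 𝕆`: block-diagonal with orthogonal `d × d` diagonal blocks. -/
def BlockOrth {d T : ℕ} (O : Matrix (Fin d × Fin T) (Fin d × Fin T) ℝ) : Prop :=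
  ∃ f : Fin T → Matrix (Fin d) (Fin d) ℝ, (∀ t, IsOrth (f t)) ∧ O = Matrix.blockDiagonal f

/-- Truncated `t`-th column `L̃_t ∈ ℝ^{(T−t)d×d}` (0-based `t`): the rows of the `t`-th block
column of `L` from block row `t` on. -/
def truncCol {d T : ℕ} (L : Matrix (Fin d × Fin T) (Fin d × Fin T) ℝ) (t : Fin T) :
    Matrix (Fin (T - t.val) × Fin d) (Fin d) ℝ :=
  fun p j => L (p.2, ⟨t.val + p.1.val, by have := p.1.isLt; omega⟩) (j, t)

/-- Column covariance `Σ̃_t^L = L̃_t L̃_tᵀ`. -/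
noncomputable def colCov {d T : ℕ} (L : Matrix (Fin d × Fin T) (Fin d × Fin T) ℝ) (t : Fin T) :
    Matrix (Fin (T - t.val) × Fin d) (Fin (T - t.val) × Fin d) ℝ :=
  truncCol L t * (truncCol L t)ᵀ

/-- The positive semidefinite square root of a PSD matrix (junk value `0` otherwise). -/
noncomputable def sqrtPSD {n : Type*} [Fintype n] [DecidableEq n] (P : Matrix n n ℝ) :
    Matrix n n ℝ :=
  by classical exact if h : P.PosSemidef then
    h.1.eigenvectorUnitary.1 * Matrix.diagonal (Real.sqrt ∘ h.1.eigenvalues) *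
      (star h.1.eigenvectorUnitary : Matrix n n ℝ) else 0

/-- The Bures–Wasserstein distance between (PSD) matrices. -/
noncomputable def dBW {n : Type*} [Fintype n] [DecidableEq n] (S1 S2 : Matrix n n ℝ) : ℝ :=
  Real.sqrt (Matrix.trace S1 + Matrix.trace S2 -
    2 * Matrix.trace (sqrtPSD (sqrtPSD S2 * S1 * sqrtPSD S2)))

lemma gram_dot {n : Type*} [Fintype n] [DecidableEq n] {d : ℕ} (A : Matrix (Fin d) n ℝ) (x : EuclideanSpace ℝ n) :
    (inner ℝ (Matrix.toEuclideanLin A x) (Matrix.toEuclideanLin A x) : ℝ)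
      = (WithLp.equiv 2 _ x) ⬝ᵥ ((Aᵀ * A) *ᵥ (WithLp.equiv 2 _ x)) := by
  set v : n → ℝ := WithLp.equiv 2 _ x
  rw [← Matrix.mulVec_mulVec]
  rw [Matrix.dotProduct_mulVec v Aᵀ (A *ᵥ v), Matrix.vecMul_transpose]
  simp [PiLp.inner_apply, Matrix.toEuclideanLin_apply, dotProduct, v, mul_comm]
  rw [EuclideanSpace.real_norm_sq_eq]; simp [sq]

lemma exists_orth_left {n : Type*} [Fintype n] [DecidableEq n] {d : ℕ} (C D : Matrix (Fin d) n ℝ)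
    (h : Cᵀ * C = Dᵀ * D) : ∃ Q : Matrix (Fin d) (Fin d) ℝ, IsOrth Q ∧ C = Q * D := by
  classical
  set C' := Matrix.toEuclideanLin C with hC'
  set D' := Matrix.toEuclideanLin D with hD'
  have hinner : ∀ x, (inner ℝ (C' x) (C' x) : ℝ) = inner ℝ (D' x) (D' x) := by
    intro x; rw [hC', hD', gram_dot, gram_dot, h]
  have hnorm : ∀ x, ‖C' x‖ = ‖D' x‖ := by
    intro x
    rw [norm_eq_sqrt_real_inner (C' x), norm_eq_sqrt_real_inner (D' x), hinner]
  have hker : LinearMap.ker D' ≤ LinearMap.ker C' := by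
    intro x hx
    rw [LinearMap.mem_ker] at hx ⊢
    have := hnorm x
    rw [hx, norm_zero, norm_eq_zero] at this
    exact this
  set ψ : (EuclideanSpace ℝ n) ⧸ LinearMap.ker D' →ₗ[ℝ] EuclideanSpace ℝ (Fin d) :=
    Submodule.liftQ _ C' hker with hψ
  set e := LinearMap.quotKerEquivRange D' with he
  set φ₀ : ↥(LinearMap.range D') →ₗ[ℝ] EuclideanSpace ℝ (Fin d) :=
    ψ ∘ₗ (e.symm : ↥(LinearMap.range D') →ₗ[ℝ] _) with hφ₀
  have hφ₀app : ∀ (x : EuclideanSpace ℝ n),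
      φ₀ ⟨D' x, LinearMap.mem_range_self _ x⟩ = C' x := by
    intro x
    have h1 : e.symm ⟨D' x, LinearMap.mem_range_self _ x⟩ = Submodule.Quotient.mk x := by
      rw [LinearEquiv.symm_apply_eq, he]
      exact Subtype.ext (D'.quotKerEquivRange_apply_mk x).symm
    simp [hφ₀, h1, hψ]
  have hnm : ∀ s : ↥(LinearMap.range D'), ‖φ₀ s‖ = ‖s‖ := by
    rintro ⟨_, x, rfl⟩
    rw [show (⟨D' x, ⟨x, rfl⟩⟩ : ↥(LinearMap.range D')) = ⟨D' x, LinearMap.mem_range_self _ x⟩ from rfl,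
      hφ₀app x]
    exact hnorm x
  set Φ : ↥(LinearMap.range D') →ₗᵢ[ℝ] EuclideanSpace ℝ (Fin d) := ⟨φ₀, hnm⟩ with hΦ
  set φ := Φ.extend with hφ
  have hφD : ∀ x, φ (D' x) = C' x := by
    intro x
    have := Φ.extend_apply ⟨D' x, LinearMap.mem_range_self _ x⟩
    rw [hφ]
    rw [show ((⟨D' x, LinearMap.mem_range_self _ x⟩ : ↥(LinearMap.range D')) : EuclideanSpace ℝ (Fin d)) = D' x from rfl] at this
    rw [this, hΦ]
    exact hφ₀app x
  set Q := Matrix.toEuclideanLin.symm (φ.toLinearMap) with hQ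
  have hQlin : Matrix.toEuclideanLin Q = φ.toLinearMap := by
    rw [hQ, LinearEquiv.apply_symm_apply]
  have hCQD : C = Q * D := by
    apply Matrix.toEuclideanLin.injective
    refine LinearMap.ext fun x => ?_
    have hmul : Matrix.toEuclideanLin (Q * D) x
        = Matrix.toEuclideanLin Q (Matrix.toEuclideanLin D x) := by
      simp [Matrix.toEuclideanLin_apply, Matrix.mulVec_mulVec]
    rw [hmul, hQlin]
    exact (hφD x).symm
  have hcol : ∀ k i0 : Fin d, Q i0 k = φ (EuclideanSpace.single k (1:ℝ)) i0 := by
    intro k i0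
    have h1 : φ (EuclideanSpace.single k (1:ℝ))
        = Matrix.toEuclideanLin Q (EuclideanSpace.single k (1:ℝ)) := by rw [hQlin]; rfl
    have h2 := congrArg (fun v : EuclideanSpace ℝ (Fin d) => v i0) h1
    simp only [Matrix.toEuclideanLin_apply, PiLp.toLp_apply] at h2
    rw [h2]
    simp [Matrix.mulVec, dotProduct, EuclideanSpace.single_apply, mul_ite,
      Finset.sum_ite_eq']
  have horth : Qᵀ * Q = 1 := by
    ext i j
    calc (Qᵀ * Q) i j
        = (inner ℝ (φ (EuclideanSpace.single i (1:ℝ))) (φ (EuclideanSpace.single j (1:ℝ))) : ℝ) := by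
          rw [Matrix.mul_apply, PiLp.inner_apply]
          simp [Matrix.transpose_apply, hcol, RCLike.inner_apply]
          exact Finset.sum_congr rfl fun _ _ => mul_comm _ _
      _ = (inner ℝ (EuclideanSpace.single i (1:ℝ)) (EuclideanSpace.single j (1:ℝ)) : ℝ) :=
          φ.inner_map_map _ _
      _ = (1 : Matrix (Fin d) (Fin d) ℝ) i j := by
          simp [EuclideanSpace.inner_single_left, EuclideanSpace.single_apply, Matrix.one_apply,
            eq_comm]
  exact ⟨Q, ⟨mul_eq_one_comm.mp horth, horth⟩, hCQD⟩


lemma mul_blockDiag {d T : ℕ} (A : Matrix (Fin d × Fin T) (Fin d × Fin T) ℝ)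
    (f : Fin T → Matrix (Fin d) (Fin d) ℝ) (i j : Fin d) (s t : Fin T) :
    (A * Matrix.blockDiagonal f) (i, s) (j, t) = ∑ k, A (i, s) (k, t) * f t k j := by
  rw [Matrix.mul_apply, Fintype.sum_prod_type]
  simp [Matrix.blockDiagonal_apply, mul_ite, Finset.sum_ite_eq']

lemma truncCol_mul_blockDiag {d T : ℕ} (M : Matrix (Fin d × Fin T) (Fin d × Fin T) ℝ)
    (f : Fin T → Matrix (Fin d) (Fin d) ℝ) (t : Fin T) :
    truncCol (M * Matrix.blockDiagonal f) t = truncCol M t * f t := by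
  funext p j
  rw [show (truncCol M t * f t) p j = ∑ k, truncCol M t p k * f t k j from Matrix.mul_apply]
  simpa [truncCol] using mul_blockDiag M f p.2 j _ t

/-- For `L, M ∈ 𝕃` there exists `O ∈ 𝕆` with `L = MO` iff all column
covariances agree: `Σ̃_t^L = Σ̃_t^M` for every `t`. -/
theorem stmt5 (d T : ℕ) (hd : 0 < d) (hT : 0 < T)
    (L M : Matrix (Fin d × Fin T) (Fin d × Fin T) ℝ)
    (hL : BlockLT L) (hM : BlockLT M) :
    (∃ O, BlockOrth O ∧ L = M * O) ↔ ∀ t : Fin T, colCov L t = colCov M t := by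
  constructor
  · rintro ⟨O, ⟨f, ho, rfl⟩, rfl⟩ t
    have h1 : truncCol (M * Matrix.blockDiagonal f) t = truncCol M t * f t :=
      truncCol_mul_blockDiag M f t
    unfold colCov
    rw [h1, Matrix.transpose_mul, ← Matrix.mul_assoc, Matrix.mul_assoc (truncCol M t), (ho t).1, Matrix.mul_one]
  · intro hcov
    have hex : ∀ t : Fin T, ∃ Qt : Matrix (Fin d) (Fin d) ℝ,
        IsOrth Qt ∧ (truncCol L t)ᵀ = Qt * (truncCol M t)ᵀ := by
      intro t
      apply exists_orth_left
      rw [Matrix.transpose_transpose, Matrix.transpose_transpose]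
      exact hcov t
    choose Qt hQt hQeq using hex
    set f : Fin T → Matrix (Fin d) (Fin d) ℝ := fun t => (Qt t)ᵀ with hf
    have hforth : ∀ t, IsOrth (f t) := by
      intro t
      exact ⟨by simpa [hf] using (hQt t).2, by simpa [hf] using (hQt t).1⟩
    have htrunc : ∀ t, truncCol L t = truncCol M t * f t := by
      intro t
      have := congrArg Matrix.transpose (hQeq t)
      rwa [Matrix.transpose_transpose, Matrix.transpose_mul, Matrix.transpose_transpose] at this
    refine ⟨Matrix.blockDiagonal f, ⟨f, hforth, rfl⟩, ?_⟩
    funext p q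
    obtain ⟨i, s⟩ := p
    obtain ⟨j, t⟩ := q
    rw [mul_blockDiag M f i j s t]
    rcases lt_or_ge s t with hst | hts
    · rw [hL (i, s) (j, t) hst]
      have : ∀ k, M (i, s) (k, t) = 0 := fun k => hM (i, s) (k, t) hst
      simp [this]
    · have hs : (⟨t.val + (s.val - t.val), by omega⟩ : Fin T) = s := by
        apply Fin.ext; simp; omega
      have hlt : s.val - t.val < T - t.val := by omega
      have h2 := congrFun (congrFun (htrunc t) (⟨s.val - t.val, hlt⟩, i)) j
      rw [show (truncCol M t * f t) ((⟨s.val - t.val, hlt⟩ : Fin (T - t.val)), i) j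
          = ∑ k, truncCol M t ((⟨s.val - t.val, hlt⟩ : Fin (T - t.val)), i) k * f t k j
          from Matrix.mul_apply] at h2
      simpa [truncCol, hs] using h2
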